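/- Consider a uniform instance and let k = ⌈W/Max⌉ with k ≥ 2. For a resource bound W' ≤ W, let OPT_FSAP(W') denote the maximum profit of a feasible contiguous coloring when the number of available colors is W'. Then OPT_FSAP((k−1)·Max) ≥ (1 − 1/k) · OPT_FSAP(W). -/
import Mathlib


open Finset

/-- Distinct jobs `i, j` overlap if their half-open intervals intersect. -/
def Overlap {n : ℕ} (s e : Fin n → ℝ) (i j : Fin n) : Prop :=
  i ≠ j ∧ (Set.Ico (s i) (e i) ∩ Set.Ico (s j) (e j)).Nonempty

/-- A feasible contiguous coloring with `W'` available colors. -/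
def IsContigColoring {n : ℕ} (W' : ℕ) (s e : Fin n → ℝ) (rmax : Fin n → ℕ)
    (c : Fin n → Finset (Fin W')) : Prop :=
  (∀ i, c i = ∅ ∨ ∃ a b : Fin W', a ≤ b ∧ c i = Finset.Icc a b) ∧
  (∀ i, (c i).card ≤ rmax i) ∧
  (∀ i j, Overlap s e i j → c i ∩ c j = ∅)

/-- Profit of a contiguous coloring. -/
def colProfit {n W' : ℕ} (p : Fin n → ℝ) (c : Fin n → Finset (Fin W')) : ℝ :=
  ∑ i, p i * (c i).card

def phiF (t M x : ℕ) : ℕ := if x < t*M then x else x - M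
def psiF (t M y : ℕ) : ℕ := if y < t*M then y else y + M

lemma phi_lt {t M k W : ℕ} (ht : t + 1 ≤ k) (hWk : W ≤ k*M)
    {x : ℕ} (hx : x < W) (hb : ¬(t*M ≤ x ∧ x < (t+1)*M)) : phiF t M x < (k-1)*M := by
  have e1 : (t+1)*M = t*M + M := by ring
  have e2 : (k-1)*M = k*M - M := Nat.sub_one_mul k M
  have e3 : t*M ≤ (k-1)*M := mul_le_mul_left (by omega) M
  have e4 : M ≤ k*M := Nat.le_mul_of_pos_left M (by omega)
  unfold phiF; split_ifs <;> omega

lemma phi_order {t M : ℕ} {x y : ℕ} (hx : ¬(t*M ≤ x ∧ x < (t+1)*M))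
    (hy : ¬(t*M ≤ y ∧ y < (t+1)*M)) : phiF t M x ≤ phiF t M y ↔ x ≤ y := by
  have e1 : (t+1)*M = t*M + M := by ring
  unfold phiF; split_ifs <;> omega

lemma psi_spec {t M : ℕ} (hM : 1 ≤ M) (y : ℕ) :
    phiF t M (psiF t M y) = y ∧ ¬(t*M ≤ psiF t M y ∧ psiF t M y < (t+1)*M) := by
  have e1 : (t+1)*M = t*M + M := by ring
  unfold phiF psiF; split_ifs <;> omega

lemma contig_of_convex {m : ℕ} (F : Finset (Fin m))
    (h : ∀ x y z : Fin m, x ∈ F → z ∈ F → x ≤ y → y ≤ z → y ∈ F) :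
    F = ∅ ∨ ∃ a b : Fin m, a ≤ b ∧ F = Finset.Icc a b := by
  rcases F.eq_empty_or_nonempty with hF | hF
  · exact Or.inl hF
  · refine Or.inr ⟨F.min' hF, F.max' hF, F.min'_le _ (F.max'_mem hF), ?_⟩
    ext y
    simp only [Finset.mem_Icc]
    exact ⟨fun hy => ⟨F.min'_le y hy, F.le_max' y hy⟩,
      fun ⟨h1, h2⟩ => h _ y _ (F.min'_mem hF) (F.max'_mem hF) h1 h2⟩

lemma shift_coloring {n W M k : ℕ} (hM : 1 ≤ M) (hk : 2 ≤ k) (hWk : W ≤ k * M)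
    (s e : Fin n → ℝ) (c : Fin n → Finset (Fin W))
    (hc : IsContigColoring W s e (fun _ => M) c) (t : ℕ) (ht : t + 1 ≤ k) :
    ∃ d : Fin n → Finset (Fin ((k-1)*M)),
      IsContigColoring ((k-1)*M) s e (fun _ => M) d ∧
      ∀ i, (d i).card = ((c i).filter (fun x => ¬ (t*M ≤ x.val ∧ x.val < (t+1)*M))).card := by
  have hW' : 0 < (k-1)*M := Nat.mul_pos (by omega) (by omega)
  set W' := (k-1)*M with hW'def
  -- the image map
  set g : Fin W → Fin W' := fun x => ⟨phiF t M x.val % W', Nat.mod_lt _ hW'⟩ with hg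
  have hgval : ∀ x : Fin W, ¬(t*M ≤ x.val ∧ x.val < (t+1)*M) → (g x).val = phiF t M x.val := by
    intro x hx
    exact Nat.mod_eq_of_lt (phi_lt ht hWk x.isLt hx)
  set d : Fin n → Finset (Fin W') :=
    fun i => ((c i).filter (fun x => ¬ (t*M ≤ x.val ∧ x.val < (t+1)*M))).image g with hd
  have hmem : ∀ i (x : Fin W), x ∈ (c i).filter (fun x => ¬ (t*M ≤ x.val ∧ x.val < (t+1)*M)) →
      (x ∈ c i ∧ ¬(t*M ≤ x.val ∧ x.val < (t+1)*M)) := by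
    intro i x hx; simpa using Finset.mem_filter.1 hx
  have hinj : ∀ i, Set.InjOn g ((c i).filter (fun x => ¬ (t*M ≤ x.val ∧ x.val < (t+1)*M))) := by
    intro i u hu v hv huv
    have hu2 := (hmem i u hu).2
    have hv2 := (hmem i v hv).2
    have h1 : phiF t M u.val = phiF t M v.val := by
      have := congrArg Fin.val huv
      rwa [hgval u hu2, hgval v hv2] at this
    have := (phi_order hu2 hv2).1 h1.le
    have := (phi_order hv2 hu2).1 h1.ge
    exact Fin.ext (le_antisymm ‹u.val ≤ v.val› ‹v.val ≤ u.val›)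
  refine ⟨d, ⟨?_, ?_, ?_⟩, ?_⟩
  · -- contiguity
    intro i
    apply contig_of_convex
    intro x y z hx hz hxy hyz
    obtain ⟨u, hu, hux⟩ := Finset.mem_image.1 hx
    obtain ⟨v, hv, hvz⟩ := Finset.mem_image.1 hz
    obtain ⟨hu1, hu2⟩ := hmem i u hu
    obtain ⟨hv1, hv2⟩ := hmem i v hv
    have hxu : x.val = phiF t M u.val := by rw [← hux]; exact hgval u hu2
    have hzv : z.val = phiF t M v.val := by rw [← hvz]; exact hgval v hv2
    obtain ⟨hpsi1, hpsi2⟩ := psi_spec (t := t) hM y.val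
    set w : ℕ := psiF t M y.val with hwdef
    -- u.val ≤ w ≤ v.val
    have hle1 : phiF t M u.val ≤ phiF t M w := by
      rw [hpsi1, ← hxu]; exact le_trans (le_refl _) hxy
    have hle2 : phiF t M w ≤ phiF t M v.val := by
      rw [hpsi1, ← hzv]; exact hyz
    have huw : u.val ≤ w := (phi_order hu2 hpsi2).1 hle1
    have hwv : w ≤ v.val := (phi_order hpsi2 hv2).1 hle2
    have hwW : w < W := lt_of_le_of_lt hwv v.isLt
    -- w ∈ c i by convexity of c i
    have hwc : (⟨w, hwW⟩ : Fin W) ∈ c i := by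
      rcases hc.1 i with hemp | ⟨a, b, hab, hicc⟩
      · rw [hemp] at hu1; exact absurd hu1 (Finset.notMem_empty u)
      · rw [hicc] at hu1 hv1 ⊢
        rw [Finset.mem_Icc] at hu1 hv1 ⊢
        exact ⟨le_trans hu1.1 huw, le_trans hwv hv1.2⟩
    refine Finset.mem_image.2 ⟨⟨w, hwW⟩, Finset.mem_filter.2 ⟨hwc, hpsi2⟩, ?_⟩
    apply Fin.ext
    rw [hgval _ hpsi2]
    exact hpsi1
  · -- cardinality bound
    intro i
    calc (d i).card ≤ ((c i).filter _).card := Finset.card_image_le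
      _ ≤ (c i).card := Finset.card_filter_le _ _
      _ ≤ M := hc.2.1 i
  · -- disjointness
    intro i j hov
    rw [Finset.eq_empty_iff_forall_notMem]
    intro y hy
    obtain ⟨hyi, hyj⟩ := Finset.mem_inter.1 hy
    obtain ⟨u, hu, hux⟩ := Finset.mem_image.1 hyi
    obtain ⟨v, hv, hvy⟩ := Finset.mem_image.1 hyj
    obtain ⟨hu1, hu2⟩ := hmem i u hu
    obtain ⟨hv1, hv2⟩ := hmem j v hv
    have h1 : phiF t M u.val = phiF t M v.val := by
      have : (g u).val = (g v).val := by rw [hux, hvy]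
      rwa [hgval u hu2, hgval v hv2] at this
    have huv : u = v := by
      have h2 := (phi_order hu2 hv2).1 h1.le
      have h3 := (phi_order hv2 hu2).1 h1.ge
      exact Fin.ext (le_antisymm h2 h3)
    have := hc.2.2 i j hov
    have : u ∈ c i ∩ c j := Finset.mem_inter.2 ⟨hu1, huv ▸ hv1⟩
    rw [hc.2.2 i j hov] at this
    exact absurd this (Finset.notMem_empty u)
  · intro i
    exact Finset.card_image_of_injOn (hinj i)

lemma count_partition {W M k : ℕ} (hM : 1 ≤ M) (hWk : W ≤ k*M) (F : Finset (Fin W)) :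
    ∑ t ∈ Finset.range k, (F.filter (fun x => t*M ≤ x.val ∧ x.val < (t+1)*M)).card
      = F.card := by
  have hfib : ∀ x ∈ F, x.val / M ∈ Finset.range k := by
    intro x _
    rw [Finset.mem_range, Nat.div_lt_iff_lt_mul (by omega)]
    have h1 : (x : ℕ) < W := x.isLt
    have h2 : k * M = M * k := by ring
    omega
  rw [Finset.card_eq_sum_card_fiberwise hfib]
  refine Finset.sum_congr rfl fun t _ => ?_
  congr 1
  apply Finset.filter_congr
  intro x _
  have e1 : (t+1)*M = t*M + M := by ring
  have e2 : M*(t+1) = t*M + M := by ring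
  have h3 : x.val / M * M ≤ x.val := Nat.div_mul_le_self _ _
  constructor
  · rintro ⟨h1, h2'⟩
    have ha := (Nat.div_lt_iff_lt_mul (show 0 < M by omega)).2 (show x.val < (t+1) * M by omega)
    have hb := (Nat.le_div_iff_mul_le (show 0 < M by omega)).2 (show t * M ≤ x.val by omega)
    omega
  · rintro rfl
    have hb : x.val < (x.val / M + 1) * M := by
      have h2 := Nat.div_add_mod x.val M
      have h3 := Nat.mod_lt x.val (show 0 < M by omega)
      nlinarith
    constructor <;> omega


theorem stmt_6 {n : ℕ} (s e : Fin n → ℝ) (hse : ∀ i, s i < e i)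
    (W : ℕ) (hW : 1 ≤ W) (rmax : Fin n → ℕ) (hrmax : ∀ i, rmax i ≤ W)
    (p : Fin n → ℝ) (hp : ∀ i, 1 ≤ p i)
    (Max : ℕ) (hMax1 : 1 ≤ Max) (hMaxW : Max ≤ W)
    (hup : ∀ i, p i = 1) (hur : ∀ i, rmax i = Max)
    (k : ℕ) (hk : k = ⌈(W : ℝ) / (Max : ℝ)⌉₊) (hk2 : 2 ≤ k)
    (OPT' : ℝ)
    (hOPT' : IsGreatest {P : ℝ | ∃ c : Fin n → Finset (Fin ((k - 1) * Max)),
      IsContigColoring ((k - 1) * Max) s e rmax c ∧ colProfit p c = P} OPT')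
    (OPT : ℝ)
    (hOPT : IsGreatest {P : ℝ | ∃ c : Fin n → Finset (Fin W),
      IsContigColoring W s e rmax c ∧ colProfit p c = P} OPT) :
    (1 - 1 / (k : ℝ)) * OPT ≤ OPT' := by
  -- W ≤ k * Max
  have hMR : (0:ℝ) < (Max:ℝ) := by exact_mod_cast hMax1
  have hWk : W ≤ k * Max := by
    have h1 : (W:ℝ)/(Max:ℝ) ≤ (k:ℝ) := hk ▸ Nat.le_ceil _
    rw [div_le_iff₀ hMR] at h1
    exact_mod_cast h1
  have hrm : rmax = fun _ => Max := funext hur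
  obtain ⟨c, hc, hcP⟩ := hOPT.1
  rw [hrm] at hc
  set N : ℕ := ∑ i, (c i).card with hN
  have hprofit : ∀ {W'' : ℕ} (d : Fin n → Finset (Fin W'')),
      colProfit p d = ((∑ i, (d i).card : ℕ) : ℝ) := by
    intro W'' d
    unfold colProfit
    push_cast
    exact Finset.sum_congr rfl fun i _ => by rw [hup i, one_mul]
  have hOPTN : OPT = (N : ℝ) := by rw [← hcP, hprofit]
  set P : ℕ → ℕ := fun t =>
    ∑ i, ((c i).filter (fun x => ¬(t*Max ≤ x.val ∧ x.val < (t+1)*Max))).card with hP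
  -- sum over t of P t equals (k-1) * N
  have hsum : ∑ t ∈ Finset.range k, P t = (k-1) * N := by
    rw [hP]
    rw [Finset.sum_comm]
    rw [hN, Finset.mul_sum]
    refine Finset.sum_congr rfl fun i _ => ?_
    have hpos := count_partition (M := Max) (k := k) hMax1 hWk (c i)
    have hper : ∀ t ∈ Finset.range k,
        ((c i).filter (fun x => t*Max ≤ x.val ∧ x.val < (t+1)*Max)).card +
        ((c i).filter (fun x => ¬(t*Max ≤ x.val ∧ x.val < (t+1)*Max))).card = (c i).card := by
      intro t _
      exact Finset.card_filter_add_card_filter_not _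
    have htot : ∑ t ∈ Finset.range k,
        (((c i).filter (fun x => t*Max ≤ x.val ∧ x.val < (t+1)*Max)).card +
         ((c i).filter (fun x => ¬(t*Max ≤ x.val ∧ x.val < (t+1)*Max))).card) = k * (c i).card := by
      rw [Finset.sum_congr rfl hper, Finset.sum_const, Finset.card_range, smul_eq_mul]
    rw [Finset.sum_add_distrib, hpos] at htot
    have hkN : (k-1) * (c i).card = k * (c i).card - (c i).card := Nat.sub_one_mul _ _
    omega
  -- each P t is at most OPT'
  have hbound : ∀ t ∈ Finset.range k, (P t : ℝ) ≤ OPT' := by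
    intro t htk
    rw [Finset.mem_range] at htk
    obtain ⟨d, hd, hdcard⟩ := shift_coloring hMax1 hk2 hWk s e c hc t (by omega)
    have hdP : colProfit p d = (P t : ℝ) := by
      rw [hprofit d]
      congr 1
      exact Finset.sum_congr rfl fun i _ => hdcard i
    have : colProfit p d ∈ {P : ℝ | ∃ c : Fin n → Finset (Fin ((k - 1) * Max)),
        IsContigColoring ((k - 1) * Max) s e rmax c ∧ colProfit p c = P} := by
      exact ⟨d, by rw [hrm]; exact hd, rfl⟩
    have := hOPT'.2 this
    linarith [hdP ▸ this]
  -- pigeonhole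
  have hex : ∃ t ∈ Finset.range k, (k-1) * N ≤ k * P t := by
    apply Finset.exists_le_of_sum_le (f := fun _ => (k-1)*N) (g := fun t => k * P t)
    · exact ⟨0, Finset.mem_range.2 (by omega)⟩
    · rw [Finset.sum_const, Finset.card_range, smul_eq_mul, ← Finset.mul_sum, hsum]
  obtain ⟨t, htk, hPt⟩ := hex
  have hkR : (0:ℝ) < (k:ℝ) := by positivity
  have hPtR : ((k:ℝ) - 1) * (N:ℝ) ≤ (k:ℝ) * (P t : ℝ) := by
    have : (((k-1) * N : ℕ) : ℝ) ≤ ((k * P t : ℕ) : ℝ) := by exact_mod_cast hPt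
    push_cast [Nat.cast_sub (show 1 ≤ k by omega)] at this
    convert this using 2 <;> push_cast <;> ring
  have hfin : (1 - 1/(k:ℝ)) * (N:ℝ) ≤ (P t : ℝ) := by
    rw [show (1 - 1/(k:ℝ)) = ((k:ℝ)-1)/(k:ℝ) by field_simp]
    rw [div_mul_eq_mul_div, div_le_iff₀ hkR]
    linarith
  rw [hOPTN]
  linarith [hbound t htk]
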